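/- arXiv:1203.1643 — 2 statements merged into one kernel-verified Lean document; each statement's English description precedes it below -/
import Mathlib

section
/- Let w ≥ 1 and r ≥ 1 be integers, and let r₁,…,r_w be integers with 1 ≤ r_j ≤ r for all j. Set r_max = max_j r_j, r_min = min_j r_j, and n = Σ_{j=1}^{w} r_j. Let T = [T_{i,j}]_{1≤i,j≤w} be a random block matrix over F₂ (with wr rows and n columns) in which each block T_{i,j} has size r×r_j, where for every pair (i,j) with j ≤ i the entries of T_{i,j} are independent and uniformly distributed on F₂ (independently across all such blocks), and for every pair (i,j) with j > i the block T_{i,j} is an arbitrary fixed r×r_j matrix over F₂. Then for every integer γ with 0 ≤ γ ≤ n−1, setting u = ⌈(n−γ)/r_min⌉, the probability that rank(T) < n − γ is at most u·(1 − 2^{−r_max})·2^{−γ + n − wr + (r − r_min)(u−1)}. -/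
/-!
If `rank T < n - γ`, then for every set `S` of `n - γ` columns some nonzero `x` supported on `S`
satisfies `T x = 0`; take for `S` the first `n - γ` columns in block order. Apply the union bound
over such `x`, grouped by the first block `m` in which `x` is nonzero. Each of the `r (w - m)` rows
of the block rows `i ≥ m` meets the uniform block `T_{i,m}` at a nonzero coordinate of `x`, so
`Pr[T x = 0] ≤ 2^{-r(w-m)}`. The vectors of group `m` live on the `t ≤ n - γ - r_min m`
columns of `S` in blocks `≥ m` and are nonzero on the at most `r_max` of them in block `m`, so
there are at most `2^t (1 - 2^{-r_max})` of them; and the group is nonempty only if `S` reaches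
block `m`, which forces `r_min m < n - γ`, i.e. `m < u`.
-/

open Finset Matrix

theorem exists_card_eq_forall_lt_mem {α β : Type*} [Fintype α] [LinearOrder β] (f : α → β)
    {N : ℕ} (hN : N ≤ Fintype.card α) :
    ∃ S : Finset α, #S = N ∧ ∀ c ∈ S, ∀ c', f c' < f c → c' ∈ S := by
  classical
  induction N with
  | zero => exact ⟨∅, rfl, by simp⟩
  | succ N ih =>
    obtain ⟨S, hSN, hS⟩ := ih (by omega)
    have hne : Sᶜ.Nonempty := by
      rw [← card_pos, card_compl]
      omega
    obtain ⟨c, hc, hmin⟩ := Sᶜ.exists_min_image f hne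
    refine ⟨insert c S, by rw [card_insert_of_notMem (mem_compl.mp hc), hSN], ?_⟩
    simp only [mem_insert]
    rintro d (rfl | hd) c' hlt
    · by_contra h
      exact (hmin c' (mem_compl.mpr (not_or.mp h).2)).not_gt hlt
    · exact Or.inr (hS d hd c' hlt)

theorem Matrix.exists_mulVec_eq_zero_of_rank_lt_card {m n K : Type*} [Fintype m] [Fintype n]
    [DecidableEq n] [Field K] (A : Matrix m n K) (S : Finset n) (h : A.rank < #S) :
    ∃ x : n → K, x ≠ 0 ∧ (∀ c ∉ S, x c = 0) ∧ A *ᵥ x = 0 := by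
  set B := A.submatrix id ((↑) : S → n)
  have hB : Module.finrank K (LinearMap.range B.mulVecLin) < Module.finrank K (S → K) := by
    simpa [Matrix.rank] using (A.rank_submatrix_le id _).trans_lt h
  obtain ⟨y, hy, hy0⟩ := Submodule.exists_mem_ne_zero_of_ne_bot
    (LinearMap.ker_ne_bot_of_finrank_lt (f := B.mulVecLin.rangeRestrict) hB)
  refine ⟨fun c => if h : c ∈ S then y ⟨c, h⟩ else 0, ?_, fun c hc => dif_neg hc, ?_⟩
  · contrapose! hy0
    ext c
    simpa using congrFun hy0 c
  · ext i
    rw [LinearMap.ker_rangeRestrict, LinearMap.mem_ker, mulVecLin_apply] at hy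
    have hyi := congrFun hy i
    simp only [mulVec, dotProduct, submatrix_apply, id_eq, B, mul_dite, mul_zero] at hyi ⊢
    rw [← sum_attach_eq_sum_dite S fun c => A i c * y c, ← univ_eq_attach]
    exact hyi

theorem card_filter_forall_notMem_eq_zero {α K : Type*} [Fintype α] [DecidableEq α] [Fintype K]
    [DecidableEq K] [Zero K] (T : Finset α) :
    #{x : α → K | ∀ c ∉ T, x c = 0} = Fintype.card K ^ #T := by
  have : ({x : α → K | ∀ c ∉ T, x c = 0} : Finset _) =
      Fintype.piFinset fun c => if c ∈ T then univ else {0} := by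
    ext x
    simp only [mem_filter, mem_univ, true_and, Fintype.mem_piFinset]
    refine forall_congr' fun c => ?_
    split_ifs with hc <;> simp [hc]
  rw [this, Fintype.card_piFinset]
  simp [apply_ite, prod_ite_mem]

theorem card_filter_supported_not_supported_add {α K : Type*} [Fintype α] [DecidableEq α]
    [Fintype K] [DecidableEq K] [Zero K] {T T' : Finset α} (h : T' ⊆ T) :
    #{x : α → K | (∀ c ∉ T, x c = 0) ∧ ¬ ∀ c ∉ T', x c = 0} + Fintype.card K ^ #T'
      = Fintype.card K ^ #T := by
  rw [← card_filter_forall_notMem_eq_zero T, ← card_filter_forall_notMem_eq_zero T',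
    ← card_filter_add_card_filter_not (s := {x : α → K | ∀ c ∉ T, x c = 0})
      (fun x => ∀ c ∉ T', x c = 0), add_comm, filter_filter, filter_filter]
  congr 3
  ext x
  exact ⟨fun hx => ⟨fun c hc => hx c (fun hc' => hc (h hc')), hx⟩, fun hx => hx.2⟩

theorem card_filter_eq_zero_mul_card_le {Ω V : Type*} [Fintype Ω] [AddGroup Ω] [Fintype V]
    [AddZeroClass V] [DecidableEq V] (f : Ω → V) (g : V → Ω)
    (hfg : ∀ ω v, f (ω + g v) = f ω + v) :
    #{ω | f ω = 0} * Fintype.card V ≤ Fintype.card Ω := by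
  rw [← Fintype.card_subtype, ← Fintype.card_prod]
  refine Fintype.card_le_of_injective (fun p => p.1.1 + g p.2) ?_
  rintro ⟨⟨ω, hω⟩, v⟩ ⟨⟨ω', hω'⟩, v'⟩ h
  have hv : v = v' := by simpa [hfg, hω, hω'] using congrArg f h
  subst hv
  simpa using h

theorem Finset.card_filter_sigma_fst_mem {ι : Type*} {α : ι → Type*} [Fintype ι]
    [DecidableEq ι] [∀ i, Fintype (α i)] (J : Finset ι) :
    #{c : Σ i, α i | c.1 ∈ J} = ∑ i ∈ J, Fintype.card (α i) := by
  rw [show ({c : Σ i, α i | c.1 ∈ J} : Finset _) = J.sigma fun _ => univ by ext; simp,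
    card_sigma]
  rfl

theorem pow_sub_pow_le_mul_one_sub_zpow {q : ℝ} (hq : 1 ≤ q) {a b k : ℕ} (h : a ≤ b + k) :
    q ^ a - q ^ b ≤ q ^ a * (1 - q ^ (-(k : ℤ))) := by
  have hq0 : q ≠ 0 := by positivity
  rw [mul_one_sub, ← zpow_natCast, ← zpow_add₀ hq0, ← zpow_natCast q b]
  gcongr
  omega

namespace RBLT

variable {K : Type*} {w r : ℕ} {rj : Fin w → ℕ}

abbrev BlockFamily (K : Type*) (r : ℕ) (rj : Fin w → ℕ) :=
  (i j : Fin w) → Matrix (Fin r) (Fin (rj j)) K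

def blockMatrix (F L : BlockFamily K r rj) : Matrix (Fin w × Fin r) (Σ j, Fin (rj j)) K :=
  Matrix.of fun p c => if c.1 ≤ p.1 then L p.1 c.1 p.2 c.2 else F p.1 c.1 p.2 c.2

theorem card_blockMatrix_mulVec_eq_zero_mul_le [Field K] [Fintype K] [DecidableEq K]
    (F : BlockFamily K r rj) {x : (Σ j, Fin (rj j)) → K} {m : Fin w} {a : Fin (rj m)}
    (ha : x ⟨m, a⟩ ≠ 0) :
    #{L | blockMatrix F L *ᵥ x = 0} * Fintype.card K ^ (r * (w - m))
      ≤ Fintype.card (BlockFamily K r rj) := by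
  let f : BlockFamily K r rj → ({i : Fin w // m ≤ i} → Fin r → K) :=
    fun L i p => (blockMatrix F L *ᵥ x) (i, p)
  -- `g v` only touches column `⟨m, a⟩` in block rows `i ≥ m`, i.e. entries of random blocks.
  let g : ({i : Fin w // m ≤ i} → Fin r → K) → BlockFamily K r rj := fun v i j =>
    Matrix.of fun p b =>
      if h : m ≤ i ∧ (⟨j, b⟩ : Σ j, Fin (rj j)) = ⟨m, a⟩ then
        v ⟨i, h.1⟩ p / x ⟨m, a⟩
      else 0
  have hfg : ∀ L v, f (L + g v) = f L + v := by
    intro L v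
    funext ⟨i, hi⟩ p
    have hentry : ∀ c, blockMatrix F (L + g v) (i, p) c * x c
        = blockMatrix F L (i, p) c * x c + if c = ⟨m, a⟩ then v ⟨i, hi⟩ p else 0 := by
      rintro ⟨j, b⟩
      by_cases hc : (⟨j, b⟩ : Σ j, Fin (rj j)) = ⟨m, a⟩
      · cases hc
        simp [blockMatrix, g, hi, ha, add_mul]
      · by_cases hji : j ≤ i <;> simp [blockMatrix, g, hc, hji]
    simp only [f, mulVec, dotProduct, hentry, sum_add_distrib, sum_ite_eq', mem_univ, if_true,
      Pi.add_apply]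
  have hcardV :
      Fintype.card ({i : Fin w // m ≤ i} → Fin r → K) = Fintype.card K ^ (r * (w - m)) := by
    simp [Fintype.card_subtype, filter_le_eq_Ici, ← pow_mul]
  calc #{L | blockMatrix F L *ᵥ x = 0} * Fintype.card K ^ (r * (w - m))
      ≤ #{L | f L = 0} * Fintype.card ({i : Fin w // m ≤ i} → Fin r → K) := by
        rw [hcardV]
        gcongr with L _
        intro hL
        funext i p
        simp [f, hL]
    _ ≤ _ := card_filter_eq_zero_mul_card_le f g hfg

theorem card_filter_fst_lt_eq_sum {S : Finset (Σ j, Fin (rj j))}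
    (hS : ∀ c ∈ S, ∀ c' : Σ j, Fin (rj j), c'.1 < c.1 → c' ∈ S)
    {m : Fin w} {b : Fin (rj m)} (hmb : ⟨m, b⟩ ∈ S) :
    #{c ∈ S | c.1 < m} = ∑ j ∈ Iio m, rj j := by
  rw [show {c ∈ S | c.1 < m} = ({c | c.1 ∈ Iio m} : Finset (Σ j, Fin (rj j))) by
    ext c
    simp only [mem_filter, mem_univ, true_and, mem_Iio]
    exact ⟨fun h => h.2, fun h => ⟨hS _ hmb c h, h⟩⟩, card_filter_sigma_fst_mem]
  simp

theorem card_filter_le_fst_le_add (S : Finset (Σ j, Fin (rj j))) (m : Fin w) :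
    #{c ∈ S | m ≤ c.1} ≤ #{c ∈ S | m < c.1} + rj m := by
  calc #{c ∈ S | m ≤ c.1}
      ≤ #({c ∈ S | m < c.1} ∪
          ({c | c.1 ∈ ({m} : Finset _)} : Finset (Σ j, Fin (rj j)))) := by
        refine card_le_card fun c hc => ?_
        simp only [mem_filter, mem_union, mem_univ, true_and, mem_singleton] at hc ⊢
        exact (eq_or_lt_of_le hc.2).elim (fun h => Or.inr h.symm) fun h => Or.inl ⟨hc.1, h⟩
    _ ≤ #{c ∈ S | m < c.1} + rj m := by
        refine (card_union_le _ _).trans_eq ?_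
        rw [card_filter_sigma_fst_mem, sum_singleton, Fintype.card_fin]

section LeadingBlock

variable [Zero K] [Fintype K] [DecidableEq K]

def leadingBlockVectors (S : Finset (Σ j, Fin (rj j))) (m : Fin w) :
    Finset ((Σ j, Fin (rj j)) → K) :=
  {x | (∀ c ∉ S, x c = 0) ∧ (∀ c : Σ j, Fin (rj j), c.1 < m → x c = 0) ∧
    ∃ b, x ⟨m, b⟩ ≠ 0}

theorem exists_mem_leadingBlockVectors {S : Finset (Σ j, Fin (rj j))}
    {x : (Σ j, Fin (rj j)) → K} (hx : x ≠ 0) (hxS : ∀ c ∉ S, x c = 0) :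
    ∃ m, x ∈ leadingBlockVectors S m := by
  obtain ⟨c₀, hc₀⟩ := Function.ne_iff.mp hx
  obtain ⟨c, hc, hmin⟩ := ({c | x c ≠ 0} : Finset _).exists_min_image Sigma.fst
    ⟨c₀, by simpa using hc₀⟩
  refine ⟨c.1, mem_filter.mpr ⟨mem_univ _, hxS, fun c' hlt => ?_, c.2, by simpa using hc⟩⟩
  by_contra h
  exact (hmin c' (by simpa using h)).not_gt hlt

theorem card_leadingBlockVectors_add_le (S : Finset (Σ j, Fin (rj j))) (m : Fin w) :
    #(leadingBlockVectors (K := K) S m) + Fintype.card K ^ #{c ∈ S | m < c.1}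
      ≤ Fintype.card K ^ #{c ∈ S | m ≤ c.1} := by
  rw [← card_filter_supported_not_supported_add
    (monotone_filter_right S fun c _ (h : m < c.1) => h.le)]
  gcongr
  intro x hx
  obtain ⟨hxS, hxm, b, hb⟩ := (mem_filter.mp hx).2
  simp only [mem_filter, mem_univ, true_and, not_and, not_lt, not_le, not_forall]
  refine ⟨fun c hc => ?_, ⟨m, b⟩, fun _ => le_rfl, hb⟩
  by_cases hcS : c ∈ S
  · exact hxm c (hc hcS)
  · exact hxS c hcS

theorem card_leadingBlockVectors_le {S : Finset (Σ j, Fin (rj j))}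
    (hS : ∀ c ∈ S, ∀ c' : Σ j, Fin (rj j), c'.1 < c.1 → c' ∈ S) {rmin rmax : ℕ}
    (hrmin : ∀ j, rmin ≤ rj j) (hrmax : ∀ j, rj j ≤ rmax) {m : Fin w}
    (hne : (leadingBlockVectors (K := K) S m).Nonempty) :
    rmin * m < #S ∧ (#(leadingBlockVectors (K := K) S m) : ℝ)
      ≤ (1 - (Fintype.card K : ℝ) ^ (-(rmax : ℤ)))
        * (Fintype.card K : ℝ) ^ ((#S : ℤ) - rmin * m) := by
  obtain ⟨x, hx⟩ := hne
  obtain ⟨hxS, -, b, hb⟩ := (mem_filter.mp hx).2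
  have hmb : ⟨m, b⟩ ∈ S := by
    by_contra h
    exact hb (hxS _ h)
  have hbefore_ge : rmin * m ≤ #{c ∈ S | c.1 < m} := by
    rw [card_filter_fst_lt_eq_sum hS hmb]
    calc rmin * m = ∑ _j ∈ Iio m, rmin := by simp [mul_comm]
      _ ≤ ∑ j ∈ Iio m, rj j := sum_le_sum fun j _ => hrmin j
  have hbefore_lt : #{c ∈ S | c.1 < m} < #S :=
    card_lt_card (filter_ssubset.mpr ⟨_, hmb, lt_irrefl m⟩)
  have hsplit : #{c ∈ S | c.1 < m} + #{c ∈ S | m ≤ c.1} = #S := by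
    simpa only [not_lt] using card_filter_add_card_filter_not (s := S) (fun c => c.1 < m)
  have hblock : #{c ∈ S | m ≤ c.1} ≤ #{c ∈ S | m < c.1} + rmax :=
    (card_filter_le_fst_le_add S m).trans (by gcongr; exact hrmax m)
  refine ⟨by omega, ?_⟩
  set q : ℝ := (Fintype.card K : ℝ) with hq_def
  have hq : 1 ≤ q := Nat.one_le_cast.mpr Fintype.card_pos
  calc (#(leadingBlockVectors (K := K) S m) : ℝ)
      ≤ q ^ #{c ∈ S | m ≤ c.1} - q ^ #{c ∈ S | m < c.1} := by
        rw [le_sub_iff_add_le, hq_def]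
        exact_mod_cast card_leadingBlockVectors_add_le (K := K) S m
    _ ≤ q ^ #{c ∈ S | m ≤ c.1} * (1 - q ^ (-(rmax : ℤ))) :=
        pow_sub_pow_le_mul_one_sub_zpow hq hblock
    _ ≤ _ := by
        rw [mul_comm, ← zpow_natCast]
        gcongr
        · exact sub_nonneg.mpr (zpow_le_one_of_nonpos₀ hq (by simp))
        · omega

theorem sum_card_leadingBlockVectors_div_le {S : Finset (Σ j, Fin (rj j))}
    (hS : ∀ c ∈ S, ∀ c' : Σ j, Fin (rj j), c'.1 < c.1 → c' ∈ S) {rmin rmax u : ℕ}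
    (hrmin : ∀ j, rmin ≤ rj j) (hrmax : ∀ j, rj j ≤ rmax) (hr : rmin ≤ r)
    (hu : ∀ m : ℕ, rmin * m < #S → m < u) :
    ∑ m : Fin w,
        (#(leadingBlockVectors (K := K) S m) : ℝ) / (Fintype.card K : ℝ) ^ (r * (w - m))
      ≤ u * (1 - (Fintype.card K : ℝ) ^ (-(rmax : ℤ)))
        * (Fintype.card K : ℝ) ^ ((#S : ℤ) - w * r + (r - rmin) * (u - 1)) := by
  set q : ℝ := (Fintype.card K : ℝ)
  set C := (1 - q ^ (-(rmax : ℤ))) * q ^ ((#S : ℤ) - w * r + (r - rmin) * (u - 1))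
  have hq : 1 ≤ q := Nat.one_le_cast.mpr Fintype.card_pos
  have hδ : 0 ≤ 1 - q ^ (-(rmax : ℤ)) := sub_nonneg.mpr (zpow_le_one_of_nonpos₀ hq (by simp))
  have hC : 0 ≤ C := mul_nonneg hδ (by positivity)
  have hterm : ∀ m : Fin w, (#(leadingBlockVectors (K := K) S m) : ℝ) / q ^ (r * (w - m))
      ≤ if (m : ℕ) < u then C else 0 := by
    intro m
    rcases (leadingBlockVectors (K := K) S m).eq_empty_or_nonempty with hempty | hne
    · simp only [hempty, card_empty, Nat.cast_zero, zero_div]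
      split_ifs <;> simp [hC]
    obtain ⟨hmS, hcard⟩ := card_leadingBlockVectors_le hS hrmin hrmax hne
    rw [if_pos (hu m hmS), div_le_iff₀ (by positivity), ← zpow_natCast, mul_assoc,
      ← zpow_add₀ (by positivity)]
    refine hcard.trans (mul_le_mul_of_nonneg_left (zpow_le_zpow_right₀ hq ?_) hδ)
    have hm : ((r : ℤ) - rmin) * m ≤ (r - rmin) * (u - 1) :=
      mul_le_mul_of_nonneg_left (by have := hu m hmS; omega) (by omega)
    push_cast [Nat.cast_sub m.isLt.le]
    linarith
  calc _ ≤ ∑ m : Fin w, if (m : ℕ) < u then C else 0 := sum_le_sum fun m _ => hterm m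
    _ = #{m : Fin w | (m : ℕ) < u} * C := by
        rw [sum_ite, sum_const_zero, add_zero, sum_const, nsmul_eq_mul]
    _ ≤ u * C := by
        gcongr
        rw [Fin.card_filter_val_lt]
        exact_mod_cast min_le_right _ _
    _ = _ := (mul_assoc _ _ _).symm

end LeadingBlock

theorem card_blockMatrix_rank_lt_le [Field K] [Fintype K] [DecidableEq K]
    (F : BlockFamily K r rj) (S : Finset (Σ j, Fin (rj j))) :
    (#{L | (blockMatrix F L).rank < #S} : ℝ) ≤ Fintype.card (BlockFamily K r rj) *
      ∑ m : Fin w,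
        (#(leadingBlockVectors (K := K) S m) : ℝ) / (Fintype.card K : ℝ) ^ (r * (w - m)) := by
  have hsub : ({L | (blockMatrix F L).rank < #S} : Finset (BlockFamily K r rj)) ⊆
      univ.biUnion fun m =>
        (leadingBlockVectors S m).biUnion fun x => {L | blockMatrix F L *ᵥ x = 0} := by
    intro L hL
    obtain ⟨x, hx0, hxS, hx⟩ :=
      (blockMatrix F L).exists_mulVec_eq_zero_of_rank_lt_card S (mem_filter.mp hL).2
    obtain ⟨m, hm⟩ := exists_mem_leadingBlockVectors hx0 hxS
    simp only [mem_biUnion]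
    exact ⟨m, mem_univ _, x, hm, mem_filter.mpr ⟨mem_univ _, hx⟩⟩
  calc (#{L | (blockMatrix F L).rank < #S} : ℝ)
      ≤ ∑ m : Fin w, ∑ x ∈ leadingBlockVectors S m,
          (#{L | blockMatrix F L *ᵥ x = 0} : ℝ) := by
        exact_mod_cast (card_le_card hsub).trans
          (card_biUnion_le.trans (sum_le_sum fun m _ => card_biUnion_le))
    _ ≤ ∑ m : Fin w, ∑ _x ∈ leadingBlockVectors (K := K) S m,
          (Fintype.card (BlockFamily K r rj) : ℝ) / (Fintype.card K : ℝ) ^ (r * (w - m)) := by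
        gcongr with m _ x hx
        obtain ⟨-, -, a, ha⟩ := (mem_filter.mp hx).2
        rw [le_div_iff₀ (by positivity)]
        exact_mod_cast card_blockMatrix_mulVec_eq_zero_mul_le F ha
    _ = _ := by
        rw [mul_sum]
        refine sum_congr rfl fun m _ => ?_
        rw [sum_const, nsmul_eq_mul]
        ring

end RBLT

theorem stmt_1_general (w r : ℕ)
    (rj : Fin w → ℕ) (hrj : ∀ j, 1 ≤ rj j ∧ rj j ≤ r)
    (rmax rmin : ℕ)
    (hrmax : IsGreatest (Set.range rj) rmax)
    (hrmin : IsLeast (Set.range rj) rmin)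
    (n : ℕ) (hn : n = ∑ j, rj j)
    (F : (i j : Fin w) → Matrix (Fin r) (Fin (rj j)) (ZMod 2))
    (γ : ℕ) (hγ : γ ≤ n - 1)
    (u : ℕ) (hu : (u : ℤ) = ⌈((n - γ : ℕ) : ℚ) / (rmin : ℚ)⌉) :
    ((Finset.univ.filter
        (fun L : (i j : Fin w) → Matrix (Fin r) (Fin (rj j)) (ZMod 2) =>
          (Matrix.of (fun (p : Fin w × Fin r) (c : Σ j : Fin w, Fin (rj j)) =>
            if c.1 ≤ p.1 then L p.1 c.1 p.2 c.2 else F p.1 c.1 p.2 c.2)).rank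
            < n - γ)).card : ℝ)
      / (Fintype.card ((i j : Fin w) → Matrix (Fin r) (Fin (rj j)) (ZMod 2)) : ℝ)
    ≤ (u : ℝ) * (1 - (2 : ℝ) ^ (-(rmax : ℤ))) *
        (2 : ℝ) ^ (-(γ : ℤ) + (n : ℤ) - (w : ℤ) * (r : ℤ)
          + ((r : ℤ) - (rmin : ℤ)) * ((u : ℤ) - 1)) := by
  obtain ⟨⟨j₀, hj₀⟩, hrmin_le⟩ := hrmin
  obtain ⟨S, hSN, hS⟩ := exists_card_eq_forall_lt_mem (Sigma.fst : (Σ j, Fin (rj j)) → Fin w)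
    (N := n - γ) (by simp [hn])
  have hu' : ∀ m : ℕ, rmin * m < #S → m < u := by
    intro m hm
    have hpos : (0 : ℚ) < rmin := by exact_mod_cast hj₀ ▸ (hrj j₀).1
    have hm_lt : (m : ℚ) < (n - γ : ℕ) / rmin := by
      rw [lt_div_iff₀ hpos, ← hSN]
      exact_mod_cast (mul_comm rmin m) ▸ hm
    have hceil : (m : ℤ) < ⌈((n - γ : ℕ) : ℚ) / rmin⌉ :=
      Int.lt_ceil.mpr (by exact_mod_cast hm_lt)
    rw [← hu] at hceil
    exact_mod_cast hceil
  have hsum := RBLT.sum_card_leadingBlockVectors_div_le (K := ZMod 2) hS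
    (fun j => hrmin_le ⟨j, rfl⟩) (fun j => hrmax.2 ⟨j, rfl⟩) (hj₀ ▸ (hrj j₀).2) hu'
  rw [ZMod.card, Nat.cast_ofNat, hSN] at hsum
  rw [div_le_iff₀ (by positivity), ← hSN]
  refine (RBLT.card_blockMatrix_rank_lt_le F S).trans ?_
  rw [ZMod.card, Nat.cast_ofNat, mul_comm]
  refine mul_le_mul_of_nonneg_right (hsum.trans_eq ?_) (by positivity)
  push_cast [Nat.cast_sub (hγ.trans (Nat.sub_le n 1))]
  congr 2
  ring

/-- **Lemma on RBLT matrices, "vertical" case `r_j ≤ r`.**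
A random block lower-triangular (RBLT) matrix `T = [T_{i,j}]` with parameters `w`, `r`,
`{r_j}` (`1 ≤ r_j ≤ r`) has `w·r` rows and `n = Σ_j r_j` columns; the blocks `T_{i,j}` with
`j ≤ i` are `r × r_j` matrices with i.i.d. uniform entries over `F₂` (modelled by sampling the
family `L` of all lower blocks uniformly), and the blocks with `j > i` are arbitrary fixed
matrices `F i j`.  Then for every `0 ≤ γ ≤ n − 1`, with `u = ⌈(n−γ)/r_min⌉`,
`Pr{rank T < n − γ} ≤ u (1 − 2^{−r_max}) 2^{−γ + n − wr + (r − r_min)(u−1)}`.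
The probability is expressed as the fraction of block assignments `L` for which the
resulting matrix has rank less than `n − γ`. -/
theorem stmt_1 (w r : ℕ) (hw : 1 ≤ w) (hr : 1 ≤ r)
    (rj : Fin w → ℕ) (hrj : ∀ j, 1 ≤ rj j ∧ rj j ≤ r)
    (rmax rmin : ℕ)
    (hrmax : IsGreatest (Set.range rj) rmax)
    (hrmin : IsLeast (Set.range rj) rmin)
    (n : ℕ) (hn : n = ∑ j, rj j)
    (F : (i j : Fin w) → Matrix (Fin r) (Fin (rj j)) (ZMod 2))
    (γ : ℕ) (hγ : γ ≤ n - 1)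
    (u : ℕ) (hu : (u : ℤ) = ⌈((n - γ : ℕ) : ℚ) / (rmin : ℚ)⌉) :
    ((Finset.univ.filter
        (fun L : (i j : Fin w) → Matrix (Fin r) (Fin (rj j)) (ZMod 2) =>
          (Matrix.of (fun (p : Fin w × Fin r) (c : Σ j : Fin w, Fin (rj j)) =>
            if c.1 ≤ p.1 then L p.1 c.1 p.2 c.2 else F p.1 c.1 p.2 c.2)).rank
            < n - γ)).card : ℝ)
      / (Fintype.card ((i j : Fin w) → Matrix (Fin r) (Fin (rj j)) (ZMod 2)) : ℝ)
    ≤ (u : ℝ) * (1 - (2 : ℝ) ^ (-(rmax : ℤ))) *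
        (2 : ℝ) ^ (-(γ : ℤ) + (n : ℤ) - (w : ℤ) * (r : ℤ)
          + ((r : ℤ) - (rmin : ℤ)) * ((u : ℤ) - 1)) :=
  stmt_1_general w r rj hrj rmax rmin hrmax hrmin n hn F γ hγ u hu
end

section
/- Let w ≥ 1 and r ≥ 1 be integers, and let r₁,…,r_w be integers with r_j ≥ r for all j. Set r_min = min_j r_j and n = w·r. Let T = [T_{i,j}]_{1≤i,j≤w} be a random block matrix over F₂ (with wr = n rows and Σ_j r_j columns) in which each block T_{i,j} has size r×r_j, where for every pair (i,j) with j ≤ i the entries of T_{i,j} are independent and uniformly distributed on F₂ (independently across all such blocks), and for every pair (i,j) with j > i the block T_{i,j} is an arbitrary fixed r×r_j matrix over F₂. Then for every integer γ with 0 ≤ γ ≤ n−1, setting u = ⌈(n−γ)/r⌉, the probability that rank(T) < n − γ is at most u·(1 − 2^{−r})·2^{−γ + n − w·r_min + (r_min − r)(u−1)}. -/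
/-!
If `rank T < n - γ`, the left kernel `K` of `T` has dimension at least `γ + 1`. Let `t` be the
last row block on which some vector of `K` is nonzero. Since `K` lies in the space of vectors
supported on the first `t + 1` blocks, which has dimension `(t + 1) r`, we get `γ < (t + 1) r`,
i.e. `t ≥ w - u`; and `K` has at least `2 ^ γ` vectors whose last nonzero block is `t`.
Counting pairs `(T, x)` with `x T = 0` (Markov's inequality) therefore bounds the probability by
`2 ^ (-γ)` times the sum over `t ≥ w - u` and over the `(2 ^ r - 1) 2 ^ (t r)` vectors `x` with
last nonzero block `t` of `Pr[x T = 0]`. If `x` is nonzero at a row `p₀` of block `t`, then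
`x T` on the columns of blocks `j ≤ t` is an affine function of the uniform blocks `T_{t,j}`
that is onto, so `Pr[x T = 0] ≤ 2 ^ (-(t + 1) r_min)`; summing over the at most `u` values of
`t` gives the bound.
-/

open Finset Module
open scoped Matrix

theorem AddMonoidHom.card_fiber_mul_card_eq {G H : Type*} [AddGroup G] [Fintype G] [AddGroup H]
    [Fintype H] [DecidableEq H] (f : G →+ H) (hf : Function.Surjective f) (y : H) :
    #{x | f x = y} * Fintype.card H = Fintype.card G := calc
  _ = ∑ z : H, #{x | f x = z} := by
    rw [sum_congr rfl fun z _ => AddMonoidHom.card_fiber_eq_of_mem_range f (hf z) (hf y),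
      sum_const, card_univ, smul_eq_mul, mul_comm]
  _ = Fintype.card G := (card_eq_sum_card_fiberwise fun _ _ => mem_univ _).symm

theorem Finset.card_mul_le_sum_sum_card_filter {Ω ι X : Type*} [Fintype Ω] {B : Finset Ω}
    {I : Finset ι} {S : ι → Finset X} {R : Ω → X → Prop} [∀ ω x, Decidable (R ω x)] {m : ℕ}
    (h : ∀ ω ∈ B, ∃ i ∈ I, m ≤ #{x ∈ S i | R ω x}) :
    #B * m ≤ ∑ i ∈ I, ∑ x ∈ S i, #{ω | R ω x} := calc
  #B * m = ∑ _ω ∈ B, m := by rw [sum_const, smul_eq_mul]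
  _ ≤ ∑ ω ∈ B, ∑ i ∈ I, #{x ∈ S i | R ω x} := sum_le_sum fun ω hω => by
    obtain ⟨i, hi, hm⟩ := h ω hω
    exact hm.trans (single_le_sum (f := fun i => #{x ∈ S i | R ω x}) (fun _ _ => Nat.zero_le _) hi)
  _ ≤ ∑ ω, ∑ i ∈ I, #{x ∈ S i | R ω x} := sum_le_sum_of_subset (subset_univ B)
  _ = ∑ i ∈ I, ∑ x ∈ S i, #{ω | R ω x} := by
    simp only [card_filter]
    rw [sum_comm]
    exact sum_congr rfl fun i _ => sum_comm

variable {𝕜 : Type*} [Field 𝕜]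

namespace Submodule

variable [Fintype 𝕜] {V : Type*} [AddCommGroup V] [Module 𝕜 V] [Fintype V] {W' W : Submodule 𝕜 V}
  [DecidablePred (· ∈ W)] [DecidablePred (· ∈ W')]

theorem card_filter_mem_and_not_mem (h : W' ≤ W) :
    #{x | x ∈ W ∧ x ∉ W'} = Fintype.card 𝕜 ^ finrank 𝕜 W - Fintype.card 𝕜 ^ finrank 𝕜 W' := by
  classical
  have hcard (U : Submodule 𝕜 V) [DecidablePred (· ∈ U)] :
      #{x | x ∈ U} = Fintype.card 𝕜 ^ finrank 𝕜 U := by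
    rw [← Module.card_eq_pow_finrank, Fintype.card_subtype]
  rw [filter_and_not, card_sdiff_of_subset (fun x hx => by
      simp only [mem_filter, mem_univ, true_and] at hx ⊢; exact h hx),
    hcard, hcard]

theorem pow_finrank_sub_one_le_card_filter_mem_and_not_mem (h : W' < W) :
    Fintype.card 𝕜 ^ (finrank 𝕜 W - 1) ≤ #{x | x ∈ W ∧ x ∉ W'} := by
  have hlt := finrank_lt_finrank_of_lt h
  have hq : 2 ≤ Fintype.card 𝕜 := Fintype.one_lt_card
  rw [card_filter_mem_and_not_mem h.le]
  obtain ⟨d, hd⟩ : ∃ d, finrank 𝕜 W = d + 1 := ⟨_, (Nat.succ_pred_eq_of_pos (by omega)).symm⟩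
  rw [hd, Nat.add_sub_cancel, pow_succ]
  have h₁ : Fintype.card 𝕜 ^ finrank 𝕜 W' ≤ Fintype.card 𝕜 ^ d :=
    Nat.pow_le_pow_right (by omega) (by omega)
  have h₂ := Nat.mul_le_mul_left (Fintype.card 𝕜 ^ d) hq
  omega

end Submodule

section Blocks

variable (𝕜) (w r : ℕ)

def firstBlocks (k : ℕ) : Submodule 𝕜 (Fin w × Fin r → 𝕜) :=
  ⨅ p ∈ {p : Fin w × Fin r | k ≤ (p.1 : ℕ)}, LinearMap.ker (LinearMap.proj p)

variable {𝕜 w r} {k : ℕ}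

theorem mem_firstBlocks {x : Fin w × Fin r → 𝕜} :
    x ∈ firstBlocks 𝕜 w r k ↔ ∀ p : Fin w × Fin r, k ≤ (p.1 : ℕ) → x p = 0 := by
  simp [firstBlocks]

instance [DecidableEq 𝕜] : DecidablePred (· ∈ firstBlocks 𝕜 w r k) :=
  fun _ => decidable_of_iff _ mem_firstBlocks.symm

theorem firstBlocks_mono : Monotone (firstBlocks 𝕜 w r) :=
  fun _ _ hkl _ hx => mem_firstBlocks.2 fun p hp => mem_firstBlocks.1 hx p (hkl.trans hp)

theorem firstBlocks_zero : firstBlocks 𝕜 w r 0 = ⊥ :=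
  eq_bot_iff.2 fun _ hx => funext fun p => mem_firstBlocks.1 hx p (Nat.zero_le _)

theorem firstBlocks_self : firstBlocks 𝕜 w r w = ⊤ :=
  eq_top_iff.2 fun _ _ => mem_firstBlocks.2 fun p hp => absurd p.1.isLt (not_lt.2 hp)

theorem finrank_firstBlocks (hk : k ≤ w) : Module.finrank 𝕜 (firstBlocks 𝕜 w r k) = k * r := by
  classical
  have hIJ : IsCompl {p : Fin w × Fin r | (p.1 : ℕ) < k} {p | k ≤ (p.1 : ℕ)} := by
    simpa [Set.compl_ofPred] using (isCompl_compl (x := {p : Fin w × Fin r | (p.1 : ℕ) < k}))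
  rw [firstBlocks,
    (LinearMap.iInfKerProjEquiv 𝕜 (fun _ => 𝕜) hIJ.disjoint hIJ.codisjoint.top_le).finrank_eq,
    Module.finrank_fintype_fun_eq_card]
  calc _ = Fintype.card ({j : Fin w // (j : ℕ) < k} × Fin r) :=
        Fintype.card_congr Equiv.prodSubtypeFstEquivSubtypeProd
    _ = k * r := by
      rw [Fintype.card_prod, Fintype.card_subtype, Fin.card_filter_val_lt, min_eq_right hk,
        Fintype.card_fin]

variable [Fintype 𝕜] [DecidableEq 𝕜]

def blockLayer (t : ℕ) : Finset (Fin w × Fin r → 𝕜) :=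
  {x | x ∈ firstBlocks 𝕜 w r (t + 1) ∧ x ∉ firstBlocks 𝕜 w r t}

theorem card_blockLayer {t : ℕ} (ht : t < w) :
    #(blockLayer (𝕜 := 𝕜) (w := w) (r := r) t) =
      Fintype.card 𝕜 ^ ((t + 1) * r) - Fintype.card 𝕜 ^ (t * r) := by
  rw [blockLayer, Submodule.card_filter_mem_and_not_mem (firstBlocks_mono t.le_succ),
    finrank_firstBlocks ht, finrank_firstBlocks ht.le]

theorem exists_lt_pow_le_card_blockLayer_vecMul_eq_zero {κ : Type*} [Fintype κ]
    (A : Matrix (Fin w × Fin r) κ 𝕜) {γ : ℕ} (hA : A.rank < w * r - γ) :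
    ∃ t < w, γ < (t + 1) * r ∧ Fintype.card 𝕜 ^ γ ≤ #{x ∈ blockLayer t | x ᵥ* A = 0} := by
  classical
  set K := LinearMap.ker A.vecMulLinear with hKdef
  have hK : γ + 1 ≤ finrank 𝕜 K := by
    have := LinearMap.finrank_range_add_finrank_ker A.vecMulLinear
    rw [← hKdef] at this
    have hrank : finrank 𝕜 (LinearMap.range A.vecMulLinear) = A.rank := by
      rw [← Matrix.rank_transpose, Matrix.rank, Matrix.mulVecLin_transpose]
    rw [hrank, Module.finrank_fintype_fun_eq_card, Fintype.card_prod, Fintype.card_fin,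
      Fintype.card_fin] at this
    omega
  have hex : ∃ k, K ≤ firstBlocks 𝕜 w r k := ⟨w, firstBlocks_self (𝕜 := 𝕜) ▸ le_top⟩
  obtain ⟨t, ht⟩ : ∃ t, Nat.find hex = t + 1 := Nat.exists_eq_add_one.2 <| Nat.pos_of_ne_zero
    fun h0 => by
      have hK0 := Nat.find_spec hex
      rw [h0, firstBlocks_zero, le_bot_iff] at hK0
      rw [hK0, finrank_bot] at hK
      omega
  have hKt1 : K ≤ firstBlocks 𝕜 w r (t + 1) := ht ▸ Nat.find_spec hex
  have hKt : ¬ K ≤ firstBlocks 𝕜 w r t := Nat.find_min hex (by omega)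
  have htw : t + 1 ≤ w := ht ▸ Nat.find_min' hex (firstBlocks_self (𝕜 := 𝕜) ▸ le_top)
  have hdim : finrank 𝕜 K ≤ (t + 1) * r :=
    (Submodule.finrank_mono hKt1).trans (finrank_firstBlocks htw).le
  refine ⟨t, htw, by omega, ?_⟩
  calc Fintype.card 𝕜 ^ γ ≤ Fintype.card 𝕜 ^ (finrank 𝕜 K - 1) :=
        Nat.pow_le_pow_right Fintype.card_pos (by omega)
    _ ≤ #{x | x ∈ K ∧ x ∉ K ⊓ firstBlocks 𝕜 w r t} :=
        Submodule.pow_finrank_sub_one_le_card_filter_mem_and_not_mem (inf_lt_left.2 hKt)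
    _ ≤ #{x ∈ blockLayer t | x ᵥ* A = 0} := card_le_card fun x hx => by
        simp only [mem_filter, mem_univ, true_and, Submodule.mem_inf, not_and] at hx
        simp only [blockLayer, mem_filter, mem_univ, true_and]
        exact ⟨⟨hKt1 hx.1, hx.2 hx.1⟩, hx.1⟩

end Blocks

section RBLT

variable {w r : ℕ} {rj : Fin w → ℕ}

def rbltMatrix (F L : (i j : Fin w) → Matrix (Fin r) (Fin (rj j)) 𝕜) :
    Matrix (Fin w × Fin r) (Σ j, Fin (rj j)) 𝕜 :=
  Matrix.of fun p c => if c.1 ≤ p.1 then L p.1 c.1 p.2 c.2 else F p.1 c.1 p.2 c.2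

theorem rbltMatrix_eq_add (F L : (i j : Fin w) → Matrix (Fin r) (Fin (rj j)) 𝕜) :
    rbltMatrix F L = rbltMatrix 0 L + rbltMatrix F 0 := by
  ext p c
  by_cases h : c.1 ≤ p.1 <;> simp [rbltMatrix, h]

def rbltLowerLinearMap : ((i j : Fin w) → Matrix (Fin r) (Fin (rj j)) 𝕜) →ₗ[𝕜]
    Matrix (Fin w × Fin r) (Σ j, Fin (rj j)) 𝕜 where
  toFun := rbltMatrix 0
  map_add' L L' := by
    ext p c
    by_cases h : c.1 ≤ p.1 <;> simp [rbltMatrix, h]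
  map_smul' a L := by
    ext p c
    by_cases h : c.1 ≤ p.1 <;> simp [rbltMatrix, h]

variable [Fintype 𝕜] [DecidableEq 𝕜]

theorem card_vecMul_rbltMatrix_eq_zero_mul_le (F : (i j : Fin w) → Matrix (Fin r) (Fin (rj j)) 𝕜)
    {x : Fin w × Fin r → 𝕜} {p₀ : Fin w × Fin r} (hx : x p₀ ≠ 0) :
    #{L | x ᵥ* rbltMatrix F L = 0} * Fintype.card 𝕜 ^ (∑ j ∈ Iic p₀.1, rj j) ≤
      Fintype.card ((i j : Fin w) → Matrix (Fin r) (Fin (rj j)) 𝕜) := by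
  set s := (Iic p₀.1).sigma fun j => (univ : Finset (Fin (rj j)))
  let Φ := LinearMap.funLeft 𝕜 𝕜 ((↑) : s → Σ j, Fin (rj j)) ∘ₗ Matrix.vecMulBilin 𝕜 𝕜 x ∘ₗ
    rbltLowerLinearMap
  have hΦ (L) (c : s) : Φ L c = (x ᵥ* rbltMatrix 0 L) c := rfl
  have hsurj : Function.Surjective Φ := by
    intro g
    -- only row `p₀.2` of the blocks `L p₀.1 j`, `j ≤ p₀.1`, is used; it meets `x` only at `p₀`
    refine ⟨fun i j => Matrix.of fun ρ c => if h : i = p₀.1 ∧ ρ = p₀.2 ∧ j ≤ p₀.1 then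
      (x p₀)⁻¹ * g ⟨⟨j, c⟩, by simp [s, h.2.2]⟩ else 0, funext fun c => ?_⟩
    have hc : c.1.1 ≤ p₀.1 := mem_Iic.1 (mem_sigma.1 c.2).1
    rw [hΦ, Matrix.vecMul, dotProduct, sum_eq_single p₀]
    · simp [rbltMatrix, hc, hx]
    · intro p _ hp
      have : ¬ (p.1 = p₀.1 ∧ p.2 = p₀.2) := fun h => hp (Prod.ext h.1 h.2)
      simp_all [rbltMatrix]
    · simp
  set v : s → 𝕜 := fun c => -(x ᵥ* rbltMatrix F 0) c
  have hsub : ({L | x ᵥ* rbltMatrix F L = 0} : Finset _) ⊆ ({L | Φ L = v} : Finset _) := by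
    intro L hL
    simp only [mem_filter, mem_univ, true_and] at hL ⊢
    funext c
    rw [hΦ, eq_neg_iff_add_eq_zero, ← Pi.add_apply, ← Matrix.vecMul_add, ← rbltMatrix_eq_add, hL,
      Pi.zero_apply]
  calc _ ≤ #{L | Φ L = v} * Fintype.card (s → 𝕜) := by
        rw [Fintype.card_fun, Fintype.card_coe, card_sigma]
        simpa using Nat.mul_le_mul_right _ (card_le_card hsub)
    _ = _ := Φ.toAddMonoidHom.card_fiber_mul_card_eq hsurj v

theorem card_vecMul_rbltMatrix_eq_zero_mul_pow_le
    (F : (i j : Fin w) → Matrix (Fin r) (Fin (rj j)) 𝕜) {rmin : ℕ} (hrmin : ∀ j, rmin ≤ rj j)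
    {t : ℕ} {x : Fin w × Fin r → 𝕜} (hx : x ∉ firstBlocks 𝕜 w r t) :
    #{L | x ᵥ* rbltMatrix F L = 0} * Fintype.card 𝕜 ^ ((t + 1) * rmin) ≤
      Fintype.card ((i j : Fin w) → Matrix (Fin r) (Fin (rj j)) 𝕜) := by
  obtain ⟨p₀, htp, hp₀⟩ : ∃ p : Fin w × Fin r, t ≤ (p.1 : ℕ) ∧ x p ≠ 0 := by
    simpa [mem_firstBlocks] using hx
  have hcols : (t + 1) * rmin ≤ ∑ j ∈ Iic p₀.1, rj j := calc
    (t + 1) * rmin ≤ #(Iic p₀.1) * rmin := by rw [Fin.card_Iic]; gcongr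
    _ ≤ ∑ j ∈ Iic p₀.1, rj j := card_nsmul_le_sum _ _ _ fun j _ => hrmin j
  exact le_trans (Nat.mul_le_mul_left _ (Nat.pow_le_pow_right Fintype.card_pos hcols))
    (card_vecMul_rbltMatrix_eq_zero_mul_le F hp₀)

theorem sum_blockLayer_card_vecMul_rbltMatrix_eq_zero_le
    (F : (i j : Fin w) → Matrix (Fin r) (Fin (rj j)) 𝕜) {rmin : ℕ} (hrmin : ∀ j, rmin ≤ rj j)
    {t : ℕ} (ht : t < w) :
    ∑ x ∈ blockLayer t, (#{L | x ᵥ* rbltMatrix F L = 0} : ℝ) ≤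
      Fintype.card ((i j : Fin w) → Matrix (Fin r) (Fin (rj j)) 𝕜) *
        ((1 - (Fintype.card 𝕜 : ℝ) ^ (-(r : ℤ))) *
          (Fintype.card 𝕜 : ℝ) ^ (((t : ℤ) + 1) * ((r : ℤ) - rmin))) := by
  set M := (Fintype.card ((i j : Fin w) → Matrix (Fin r) (Fin (rj j)) 𝕜) : ℝ) with hM
  set Q := (Fintype.card 𝕜 : ℝ) with hQdef
  have hQ : 0 < Q := by simp [Q, Fintype.card_pos]
  have hterm : ∀ x ∈ blockLayer t, (#{L | x ᵥ* rbltMatrix F L = 0} : ℝ) ≤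
      M * Q ^ (-(((t + 1) * rmin : ℕ) : ℤ)) := fun x hx => by
    rw [zpow_neg, zpow_natCast, ← div_eq_mul_inv, le_div_iff₀ (by positivity), hM, hQdef]
    exact_mod_cast card_vecMul_rbltMatrix_eq_zero_mul_pow_le F hrmin (mem_filter.1 hx).2.2
  have hpow (a b : ℤ) : Q ^ a * Q ^ b = Q ^ (a + b) := (zpow_add₀ hQ.ne' a b).symm
  calc _ ≤ #(blockLayer (𝕜 := 𝕜) (w := w) (r := r) t) • (M * Q ^ (-(((t + 1) * rmin : ℕ) : ℤ))) :=
        sum_le_card_nsmul _ _ _ hterm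
    _ = M * ((Q ^ (((t + 1) * r : ℕ) : ℤ) - Q ^ ((t * r : ℕ) : ℤ)) *
          Q ^ (-(((t + 1) * rmin : ℕ) : ℤ))) := by
      rw [card_blockLayer ht, nsmul_eq_mul, Nat.cast_sub (Nat.pow_le_pow_right Fintype.card_pos
        (by nlinarith)), zpow_natCast, zpow_natCast]
      push_cast
      ring
    _ = _ := by
      rw [sub_mul, sub_mul, one_mul, hpow, hpow, hpow]
      congr 3 <;> push_cast <;> ring

theorem sum_Ico_sum_blockLayer_card_vecMul_rbltMatrix_eq_zero_le
    (F : (i j : Fin w) → Matrix (Fin r) (Fin (rj j)) 𝕜) {rmin : ℕ} (hrmin : ∀ j, rmin ≤ rj j)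
    (hr : r ≤ rmin) (u : ℕ) :
    ∑ t ∈ Ico (w - u) w, ∑ x ∈ blockLayer t, (#{L | x ᵥ* rbltMatrix F L = 0} : ℝ) ≤
      u * (Fintype.card ((i j : Fin w) → Matrix (Fin r) (Fin (rj j)) 𝕜) *
        ((1 - (Fintype.card 𝕜 : ℝ) ^ (-(r : ℤ))) *
          (Fintype.card 𝕜 : ℝ) ^ (((w : ℤ) - u + 1) * ((r : ℤ) - rmin)))) := by
  have hQ : (1 : ℝ) ≤ Fintype.card 𝕜 := by exact_mod_cast Fintype.card_pos
  have hfac : 0 ≤ 1 - (Fintype.card 𝕜 : ℝ) ^ (-(r : ℤ)) :=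
    sub_nonneg.2 (zpow_le_one_of_nonpos₀ hQ (by omega))
  calc _ ≤ ∑ t ∈ Ico (w - u) w, Fintype.card ((i j : Fin w) → Matrix (Fin r) (Fin (rj j)) 𝕜) *
        ((1 - (Fintype.card 𝕜 : ℝ) ^ (-(r : ℤ))) *
          (Fintype.card 𝕜 : ℝ) ^ (((w : ℤ) - u + 1) * ((r : ℤ) - rmin))) :=
        sum_le_sum fun t ht => by
          obtain ⟨hut, htw⟩ := mem_Ico.1 ht
          refine (sum_blockLayer_card_vecMul_rbltMatrix_eq_zero_le F hrmin htw).trans ?_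
          exact mul_le_mul_of_nonneg_left (mul_le_mul_of_nonneg_left (zpow_le_zpow_right₀ hQ
            (mul_le_mul_of_nonpos_right (by omega) (by omega))) hfac) (Nat.cast_nonneg _)
    _ ≤ _ := by
      rw [sum_const, Nat.card_Ico, nsmul_eq_mul]
      gcongr
      exact_mod_cast (by omega : w - (w - u) ≤ u)

end RBLT

theorem sub_le_of_intCast_eq_ceil_div {w r γ u t : ℕ}
    (hu : (u : ℤ) = ⌈((w * r - γ : ℕ) : ℚ) / (r : ℚ)⌉) (ht : γ < (t + 1) * r) : w - u ≤ t := by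
  have hr : 0 < r := Nat.pos_of_ne_zero fun h => by simp [h] at ht
  have hceil := Int.le_ceil (((w * r - γ : ℕ) : ℚ) / r)
  rw [← hu, div_le_iff₀ (by exact_mod_cast hr)] at hceil
  have hwu : w * r - γ ≤ u * r := by exact_mod_cast hceil
  have : w * r < (t + 1 + u) * r := by rw [add_mul]; omega
  have := Nat.lt_of_mul_lt_mul_right this
  omega

theorem stmt_2_general (w r : ℕ)
    (rj : Fin w → ℕ) (hrj : ∀ j, r ≤ rj j)
    (rmin : ℕ) (hrmin : IsLeast (Set.range rj) rmin)
    (n : ℕ) (hn : n = w * r)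
    (F : (i j : Fin w) → Matrix (Fin r) (Fin (rj j)) (ZMod 2))
    (γ : ℕ)
    (u : ℕ) (hu : (u : ℤ) = ⌈((n - γ : ℕ) : ℚ) / (r : ℚ)⌉) :
    ((Finset.univ.filter
        (fun L : (i j : Fin w) → Matrix (Fin r) (Fin (rj j)) (ZMod 2) =>
          (Matrix.of (fun (p : Fin w × Fin r) (c : Σ j : Fin w, Fin (rj j)) =>
            if c.1 ≤ p.1 then L p.1 c.1 p.2 c.2 else F p.1 c.1 p.2 c.2)).rank
            < n - γ)).card : ℝ)
      / (Fintype.card ((i j : Fin w) → Matrix (Fin r) (Fin (rj j)) (ZMod 2)) : ℝ)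
    ≤ (u : ℝ) * (1 - (2 : ℝ) ^ (-(r : ℤ))) *
        (2 : ℝ) ^ (-(γ : ℤ) + (n : ℤ) - (w : ℤ) * (rmin : ℤ)
          + ((rmin : ℤ) - (r : ℤ)) * ((u : ℤ) - 1)) := by
  subst hn
  change ((#{L | (rbltMatrix F L).rank < w * r - γ} : ℕ) : ℝ) / _ ≤ _
  have hrmin_le : ∀ j, rmin ≤ rj j := fun j => hrmin.2 ⟨j, rfl⟩
  have hr_le : r ≤ rmin := by obtain ⟨j, rfl⟩ := hrmin.1; exact hrj j
  have hbad := card_mul_le_sum_sum_card_filter (B := {L | (rbltMatrix F L).rank < w * r - γ})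
    (I := Ico (w - u) w) (S := blockLayer) (R := fun L x => x ᵥ* rbltMatrix F L = 0) fun L hL => by
      obtain ⟨t, htw, hγt, hcard⟩ :=
        exists_lt_pow_le_card_blockLayer_vecMul_eq_zero _ (mem_filter.1 hL).2
      exact ⟨t, mem_Ico.2 ⟨sub_le_of_intCast_eq_ceil_div hu hγt, htw⟩, hcard⟩
  have hsum := sum_Ico_sum_blockLayer_card_vecMul_rbltMatrix_eq_zero_le F hrmin_le hr_le u
  rw [ZMod.card] at hbad hsum
  have hM : (0 : ℝ) < Fintype.card ((i j : Fin w) → Matrix (Fin r) (Fin (rj j)) (ZMod 2)) := by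
    exact_mod_cast Fintype.card_pos
  rw [div_le_iff₀ hM, ← mul_le_mul_iff_of_pos_right (pow_pos (two_pos (α := ℝ)) γ)]
  refine le_trans (by exact_mod_cast hbad) (hsum.trans_eq ?_)
  have hexp : ((w : ℤ) - u + 1) * ((r : ℤ) - rmin) =
      -(γ : ℤ) + ((w * r : ℕ) : ℤ) - w * rmin + (rmin - r) * (u - 1) + γ := by
    push_cast; ring
  rw [Nat.cast_ofNat, hexp, zpow_add₀ two_ne_zero, zpow_natCast]
  ring

/-- **Lemma on RBLT matrices, "horizontal" case `r_j ≥ r`.**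
A random block lower-triangular (RBLT) matrix `T = [T_{i,j}]` with parameters `w`, `r`,
`{r_j}` (`r_j ≥ r`) has `n = w·r` rows and `Σ_j r_j` columns; the blocks `T_{i,j}` with
`j ≤ i` are `r × r_j` matrices with i.i.d. uniform entries over `F₂` (modelled by sampling
the family `L` of all lower blocks uniformly), and the blocks with `j > i` are arbitrary
fixed matrices `F i j`.  Then for every `0 ≤ γ ≤ n − 1`, with `u = ⌈(n−γ)/r⌉`,
`Pr{rank T < n − γ} ≤ u (1 − 2^{−r}) 2^{−γ + n − w·r_min + (r_min − r)(u−1)}`.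
The probability is expressed as the fraction of block assignments `L` for which the
resulting matrix has rank less than `n − γ`. -/
theorem stmt_2 (w r : ℕ) (hw : 1 ≤ w) (hr : 1 ≤ r)
    (rj : Fin w → ℕ) (hrj : ∀ j, r ≤ rj j)
    (rmin : ℕ) (hrmin : IsLeast (Set.range rj) rmin)
    (n : ℕ) (hn : n = w * r)
    (F : (i j : Fin w) → Matrix (Fin r) (Fin (rj j)) (ZMod 2))
    (γ : ℕ) (hγ : γ ≤ n - 1)
    (u : ℕ) (hu : (u : ℤ) = ⌈((n - γ : ℕ) : ℚ) / (r : ℚ)⌉) :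
    ((Finset.univ.filter
        (fun L : (i j : Fin w) → Matrix (Fin r) (Fin (rj j)) (ZMod 2) =>
          (Matrix.of (fun (p : Fin w × Fin r) (c : Σ j : Fin w, Fin (rj j)) =>
            if c.1 ≤ p.1 then L p.1 c.1 p.2 c.2 else F p.1 c.1 p.2 c.2)).rank
            < n - γ)).card : ℝ)
      / (Fintype.card ((i j : Fin w) → Matrix (Fin r) (Fin (rj j)) (ZMod 2)) : ℝ)
    ≤ (u : ℝ) * (1 - (2 : ℝ) ^ (-(r : ℤ))) *
        (2 : ℝ) ^ (-(γ : ℤ) + (n : ℤ) - (w : ℤ) * (rmin : ℤ)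
          + ((rmin : ℤ) - (r : ℤ)) * ((u : ℤ) - 1)) :=
  stmt_2_general w r rj hrj rmin hrmin n hn F γ u hu
end
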